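/- Let T > 0, let a, b, c, f : (0,T) × (0,1) → ℝ with sup_{0<x<1, 0<t≤T} |f(t,x)| < +∞, and let u ∈ C⁰([0,T] × [0,1]) with u[t] ∈ C²((0,1)) for almost all t ∈ (0,T), ∂u/∂t existing and continuous on (0,T) × [0,1], the derivatives ∂u/∂x(t,0), ∂u/∂x(t,1) existing for all t ∈ (0,T], and ∂u/∂t = a·∂²u/∂x² + b·∂u/∂x + c·u + f for almost all t ∈ (0,T) and all x ∈ (0,1). Suppose a(t,x) ≥ 0 on (0,T)×(0,1) and σ := − sup_{0<x<1, t∈(0,T)} c(t,x) > 0. Then for all ζ ∈ [0,σ), all g₀, g₁ : (0,T] → (0,+∞), k₀, k₁ : (0,T] → [1,+∞), and all t ∈ (0,T]: ‖u[t]‖_∞ ≤ max( exp(−ζt)·‖u[0]‖_∞, sup_{0<s≤t} max( r₀(s), r₁(s), ‖f[s]‖_∞/(σ−ζ) )·exp(−ζ(t−s)) ), where r₀(t) := min( |u(t,0)|, | g₀(t)·∂u/∂x(t,0) − k₀(t)·u(t,0) | ) and r₁(t) := min( |u(t,1)|, | g₁(t)·∂u/∂x(t,1) + k₁(t)·u(t,1)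 | ). -/

import Mathlib

/-!
Multiplying `u` by `exp (-ζ (t - s))` turns the equation into one with `c + ζ ≤ -(σ - ζ)`, so it
suffices to prove the case `ζ = 0`: `|u t| ≤ R` as soon as `R` bounds the initial profile, the
boundary residuals and `|f| / σ`. By the symmetry `u ↦ -u` it suffices to bound `u` from above.
If `u t x₀ > R`, maximize `u s x + δ s` over `[0,t] × [0,1]` with `δ = σ (u t x₀ - R) / 2`.
The maximum is not at time `0`, and not at `x = 0` or `x = 1`, where the sign of `∂ₓu` together
with `g ≥ 0`, `k ≥ 1` makes the Robin residual at least `u`. At an interior maximum `∂ₓu = 0` and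
`∂ₓ²u ≤ 0`, so the equation gives `∂ₜu ≤ -σ (u - R) ≤ -2δ`, whereas maximality in time gives
`∂ₜu ≥ -δ`. As the equation only holds for almost every time, the interior inequality is
obtained along good times and passed to the limit through the continuity of `∂ₜu`.
-/

open Set MeasureTheory Filter Topology

theorem ContinuousOn.tendsto_comp_prodMk {α : Type*} {F : ℝ → ℝ → ℝ} {S : Set (ℝ × ℝ)}
    (hF : ContinuousOn (fun p : ℝ × ℝ => F p.1 p.2) S) {t y : ℝ} (hS : (t, y) ∈ S)
    {l : Filter α} {s x : α → ℝ} (hs : Tendsto s l (𝓝 t)) (hx : Tendsto x l (𝓝 y))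
    (hmem : ∀ᶠ i in l, (s i, x i) ∈ S) :
    Tendsto (fun i => F (s i) (x i)) l (𝓝 (F t y)) :=
  (hF _ hS).tendsto.comp (tendsto_nhdsWithin_iff.2 ⟨hs.prodMk_nhds hx, hmem⟩)

theorem IsLocalMaxOn.sub_mul_nonpos_of_hasDerivWithinAt {f : ℝ → ℝ} {s : Set ℝ} {a f' y : ℝ}
    (h : IsLocalMaxOn f s a) (hf : HasDerivWithinAt f f' s a) (hseg : segment ℝ a y ⊆ s) :
    (y - a) * f' ≤ 0 := by
  simpa using h.hasFDerivWithinAt_nonpos hf (sub_mem_posTangentConeAt_of_segment_subset hseg)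

theorem HasDerivAt.nonneg_of_isMaxOn_Icc {f : ℝ → ℝ} {f' a b : ℝ} (hf : HasDerivAt f f' b)
    (hab : a < b) (hmax : IsMaxOn f (Icc a b) b) : 0 ≤ f' := by
  have := hmax.localize.sub_mul_nonpos_of_hasDerivWithinAt hf.hasDerivWithinAt
    (segment_symm ℝ b a ▸ (segment_eq_Icc hab.le).subset)
  nlinarith

theorem IsLocalMax.nonpos_of_hasDerivAt_deriv {g g' : ℝ → ℝ} {x₀ g'' : ℝ}
    (hmax : IsLocalMax g x₀) (hg : ∀ᶠ x in 𝓝 x₀, HasDerivAt g (g' x) x)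
    (hg' : HasDerivAt g' g'' x₀) : g'' ≤ 0 := by
  -- if `g'' > 0`, then `g' > 0` just right of `x₀` and the mean value theorem contradicts
  -- the maximum
  by_contra! hpos
  have hzero : g' x₀ = 0 := hmax.hasDerivAt_eq_zero hg.self_of_nhds
  have hright : ∀ᶠ x in 𝓝[>] x₀, 0 < g' x := by
    filter_upwards [nhdsGT_le_nhdsNE x₀ ((hasDerivAt_iff_tendsto_slope.1 hg').eventually
      (eventually_gt_nhds hpos)), self_mem_nhdsWithin] with x hslope hx
    exact pos_of_slope_pos hx hslope hzero
  obtain ⟨r, hr, hsub⟩ := mem_nhdsGT_iff_exists_Ioo_subset.1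
    (((hg.and hmax).filter_mono nhdsWithin_le_nhds).and hright)
  obtain ⟨y, hxy, hyr⟩ := exists_between (mem_Ioi.1 hr)
  have hcont : ContinuousOn g (Icc x₀ y) := by
    intro x hx
    rcases hx.1.eq_or_lt with rfl | hx₀
    · exact hg.self_of_nhds.continuousAt.continuousWithinAt
    · exact (hsub ⟨hx₀, hx.2.trans_lt hyr⟩).1.1.continuousAt.continuousWithinAt
  obtain ⟨ξ, hξ, hslope⟩ := exists_hasDerivAt_eq_slope g g' hxy hcont
    fun x hx => (hsub ⟨hx.1, hx.2.trans hyr⟩).1.1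
  have hξpos : 0 < g' ξ := (hsub ⟨hξ.1, hξ.2.trans hyr⟩).2
  rw [hslope] at hξpos
  exact hξpos.not_ge
    (div_nonpos_of_nonpos_of_nonneg (sub_nonpos.2 (hsub ⟨hxy, hyr⟩).1.2) (sub_nonneg.2 hxy.le))

theorem frequently_nhdsLT_of_ae_restrict {a b t : ℝ} {P : ℝ → Prop}
    (hP : ∀ᵐ s ∂volume.restrict (Ioo a b), P s) (ht : t ∈ Ioc a b) : ∃ᶠ s in 𝓝[<] t, P s := by
  intro hnot
  obtain ⟨l, hl, hsub⟩ := mem_nhdsLT_iff_exists_Ioo_subset.1 hnot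
  have hIoo : Ioo (max a l) t ⊆ Ioo a b := fun s hs =>
    ⟨(le_max_left _ _).trans_lt hs.1, hs.2.trans_le ht.2⟩
  have hfalse : ∀ᵐ s ∂volume.restrict (Ioo (max a l) t), False := by
    filter_upwards [ae_restrict_of_ae_restrict_of_subset hIoo hP,
      ae_restrict_mem measurableSet_Ioo] with s hs hmem
    exact hsub ⟨(le_max_right _ _).trans_lt hmem.1, hmem.2⟩ hs
  rw [ae_iff] at hfalse
  simp only [not_false_eq_true, ofPred_true, Measure.restrict_apply_univ, Real.volume_Ioo,
    ENNReal.ofReal_eq_zero, sub_nonpos] at hfalse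
  exact (max_lt ht.1 hl).not_ge hfalse

/-- `0 < σ` rules out the junk value `sSup S = 0` of an unbounded `S`. -/
theorem le_neg_of_eq_neg_sSup {S : Set ℝ} {σ x : ℝ} (hσS : σ = -sSup S) (hσ : 0 < σ)
    (hx : x ∈ S) : x ≤ -σ := by
  have hS : BddAbove S := by
    by_contra hS
    rw [Real.sSup_of_not_bddAbove hS, neg_zero] at hσS
    exact hσ.ne' hσS
  linarith [le_csSup hS hx]

theorem le_abs_mul_sub_mul {v d g k : ℝ} (hv : 0 ≤ v) (hd : d ≤ 0) (hg : 0 ≤ g) (hk : 1 ≤ k) :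
    v ≤ |g * d - k * v| :=
  le_abs.2 (Or.inr (by nlinarith [mul_nonpos_of_nonneg_of_nonpos hg hd]))

theorem le_abs_mul_add_mul {v d g k : ℝ} (hv : 0 ≤ v) (hd : 0 ≤ d) (hg : 0 ≤ g) (hk : 1 ≤ k) :
    v ≤ |g * d + k * v| :=
  le_abs.2 (Or.inl (by nlinarith [mul_nonneg hg hd]))

theorem mem_Ioo_of_isMaxOn_of_robin_le {v : ℝ → ℝ} {d₀ d₁ g₀ g₁ k₀ k₁ R y : ℝ}
    (hd₀ : HasDerivWithinAt v d₀ (Icc 0 1) 0) (hd₁ : HasDerivWithinAt v d₁ (Icc 0 1) 1)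
    (hg₀ : 0 ≤ g₀) (hg₁ : 0 ≤ g₁) (hk₀ : 1 ≤ k₀) (hk₁ : 1 ≤ k₁)
    (hr₀ : min |v 0| |g₀ * d₀ - k₀ * v 0| ≤ R) (hr₁ : min |v 1| |g₁ * d₁ + k₁ * v 1| ≤ R)
    (hy : y ∈ Icc 0 1) (hmax : IsMaxOn v (Icc 0 1) y) (hR : R < v y) : y ∈ Ioo 0 1 := by
  have hR0 : 0 ≤ R := (le_min (abs_nonneg _) (abs_nonneg _)).trans hr₀
  refine ⟨hy.1.lt_of_ne fun h0 => ?_, hy.2.lt_of_ne fun h1 => ?_⟩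
  · subst h0
    have hd : (1 - 0) * d₀ ≤ 0 := hmax.localize.sub_mul_nonpos_of_hasDerivWithinAt hd₀
      (segment_eq_Icc zero_le_one).subset
    have hv : 0 ≤ v 0 := hR0.trans hR.le
    rw [abs_of_nonneg hv, min_eq_left (le_abs_mul_sub_mul hv (by linarith) hg₀ hk₀)] at hr₀
    linarith
  · subst h1
    have hd : (0 - 1) * d₁ ≤ 0 := hmax.localize.sub_mul_nonpos_of_hasDerivWithinAt hd₁
      (by rw [segment_symm, segment_eq_Icc zero_le_one])
    have hv : 0 ≤ v 1 := hR0.trans hR.le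
    rw [abs_of_nonneg hv, min_eq_left (le_abs_mul_add_mul hv (by linarith) hg₁ hk₁)] at hr₁
    linarith

structure SolvesAt (a b c f u ut ux uxx : ℝ → ℝ → ℝ) (t : ℝ) : Prop where
  hasDerivAt_ux : ∀ x ∈ Ioo (0:ℝ) 1, HasDerivAt (u t) (ux t x) x
  hasDerivAt_uxx : ∀ x ∈ Ioo (0:ℝ) 1, HasDerivAt (ux t) (uxx t x) x
  equation : ∀ x ∈ Ioo (0:ℝ) 1, ut t x = a t x * uxx t x + b t x * ux t x + c t x * u t x + f t x

theorem SolvesAt.time_deriv_le_of_isLocalMax {a b c f u ut ux uxx : ℝ → ℝ → ℝ} {t x : ℝ}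
    (h : SolvesAt a b c f u ut ux uxx t) (hx : x ∈ Ioo 0 1) (hmax : IsLocalMax (u t) x)
    (ha : 0 ≤ a t x) : ut t x ≤ c t x * u t x + f t x := by
  have hux : ux t x = 0 := hmax.hasDerivAt_eq_zero (h.hasDerivAt_ux x hx)
  have huxx : uxx t x ≤ 0 := hmax.nonpos_of_hasDerivAt_deriv
    (eventually_of_mem (isOpen_Ioo.mem_nhds hx) h.hasDerivAt_ux) (h.hasDerivAt_uxx x hx)
  rw [h.equation x hx, hux]
  nlinarith [mul_nonpos_of_nonneg_of_nonpos ha huxx]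

structure IsParabolicSolution (T : ℝ) (a b c f u ut ux uxx : ℝ → ℝ → ℝ) : Prop where
  continuousOn : ContinuousOn (fun p : ℝ × ℝ => u p.1 p.2) (Icc 0 T ×ˢ Icc 0 1)
  hasDerivAt_time : ∀ t ∈ Ioo (0:ℝ) T, ∀ x ∈ Icc (0:ℝ) 1, HasDerivAt (fun τ => u τ x) (ut t x) t
  continuousOn_time_deriv : ContinuousOn (fun p : ℝ × ℝ => ut p.1 p.2) (Ioo 0 T ×ˢ Icc 0 1)
  hasDerivWithinAt_zero : ∀ t ∈ Ioo (0:ℝ) T, HasDerivWithinAt (u t) (ux t 0) (Icc 0 1) 0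
  hasDerivWithinAt_one : ∀ t ∈ Ioo (0:ℝ) T, HasDerivWithinAt (u t) (ux t 1) (Icc 0 1) 1
  ae_solvesAt : ∀ᵐ t ∂volume.restrict (Ioo 0 T), SolvesAt a b c f u ut ux uxx t

namespace IsParabolicSolution

variable {T : ℝ} {a b c f u ut ux uxx : ℝ → ℝ → ℝ}

theorem continuousOn_slice (hu : IsParabolicSolution T a b c f u ut ux uxx) {t : ℝ}
    (ht : t ∈ Icc 0 T) : ContinuousOn (u t) (Icc 0 1) :=
  hu.continuousOn.comp (Continuous.prodMk_right t).continuousOn fun _ hx => ⟨ht, hx⟩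

theorem neg (hu : IsParabolicSolution T a b c f u ut ux uxx) :
    IsParabolicSolution T a b c (-f) (-u) (-ut) (-ux) (-uxx) where
  continuousOn := hu.continuousOn.neg
  hasDerivAt_time t ht x hx := (hu.hasDerivAt_time t ht x hx).neg
  continuousOn_time_deriv := hu.continuousOn_time_deriv.neg
  hasDerivWithinAt_zero t ht := (hu.hasDerivWithinAt_zero t ht).neg
  hasDerivWithinAt_one t ht := (hu.hasDerivWithinAt_one t ht).neg
  ae_solvesAt := hu.ae_solvesAt.mono fun t h =>
    { hasDerivAt_ux := fun x hx => (h.hasDerivAt_ux x hx).neg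
      hasDerivAt_uxx := fun x hx => (h.hasDerivAt_uxx x hx).neg
      equation := fun x hx => by simp only [Pi.neg_apply, h.equation x hx]; ring }

theorem mul_exp (hu : IsParabolicSolution T a b c f u ut ux uxx) (ζ t₀ : ℝ) :
    IsParabolicSolution T a b (fun t x => c t x + ζ) (fun t x => Real.exp (-ζ * (t₀ - t)) * f t x)
      (fun t x => Real.exp (-ζ * (t₀ - t)) * u t x)
      (fun t x => Real.exp (-ζ * (t₀ - t)) * (ut t x + ζ * u t x))
      (fun t x => Real.exp (-ζ * (t₀ - t)) * ux t x)
      (fun t x => Real.exp (-ζ * (t₀ - t)) * uxx t x) := by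
  have hE : ∀ t, HasDerivAt (fun τ => Real.exp (-ζ * (t₀ - τ))) (Real.exp (-ζ * (t₀ - t)) * ζ) t :=
    fun t => by simpa using (((hasDerivAt_id t).const_sub t₀).const_mul (-ζ)).exp
  have hEc : Continuous fun p : ℝ × ℝ => Real.exp (-ζ * (t₀ - p.1)) := by fun_prop
  refine ⟨hEc.continuousOn.mul hu.continuousOn, fun t ht x hx => ?_,
    hEc.continuousOn.mul (hu.continuousOn_time_deriv.add
      (continuousOn_const.mul (hu.continuousOn.mono (prod_mono Ioo_subset_Icc_self subset_rfl)))),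
    fun t ht => (hu.hasDerivWithinAt_zero t ht).const_mul _,
    fun t ht => (hu.hasDerivWithinAt_one t ht).const_mul _, hu.ae_solvesAt.mono fun t h => ?_⟩
  · exact ((hE t).mul (hu.hasDerivAt_time t ht x hx)).congr_deriv (by ring)
  · exact { hasDerivAt_ux := fun x hx => (h.hasDerivAt_ux x hx).const_mul _
            hasDerivAt_uxx := fun x hx => (h.hasDerivAt_uxx x hx).const_mul _
            equation := fun x hx => by rw [h.equation x hx]; ring }

end IsParabolicSolution

/-- `max (r₀ s) (r₁ s)`, with `r₀, r₁` the Robin boundary residuals of the statement. -/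
def boundaryResidual (u ux : ℝ → ℝ → ℝ) (g₀ g₁ k₀ k₁ : ℝ → ℝ) (s : ℝ) : ℝ :=
  max (min |u s 0| |g₀ s * ux s 0 - k₀ s * u s 0|) (min |u s 1| |g₁ s * ux s 1 + k₁ s * u s 1|)

section boundaryResidual

variable {u ux : ℝ → ℝ → ℝ} {g₀ g₁ k₀ k₁ : ℝ → ℝ}

theorem boundaryResidual_nonneg (s : ℝ) : 0 ≤ boundaryResidual u ux g₀ g₁ k₀ k₁ s :=
  (le_min (abs_nonneg _) (abs_nonneg _)).trans (le_max_left _ _)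

theorem boundaryResidual_neg (s : ℝ) :
    boundaryResidual (-u) (-ux) g₀ g₁ k₀ k₁ s = boundaryResidual u ux g₀ g₁ k₀ k₁ s := by
  simp only [boundaryResidual, Pi.neg_apply, abs_neg]
  congr 2 <;> rw [← abs_neg] <;> ring_nf

theorem boundaryResidual_mul {w : ℝ → ℝ} {s : ℝ} (hw : 0 ≤ w s) :
    boundaryResidual (fun s x => w s * u s x) (fun s x => w s * ux s x) g₀ g₁ k₀ k₁ s =
      w s * boundaryResidual u ux g₀ g₁ k₀ k₁ s := by
  have h₀ : g₀ s * (w s * ux s 0) - k₀ s * (w s * u s 0) =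
      w s * (g₀ s * ux s 0 - k₀ s * u s 0) := by ring
  have h₁ : g₁ s * (w s * ux s 1) + k₁ s * (w s * u s 1) =
      w s * (g₁ s * ux s 1 + k₁ s * u s 1) := by ring
  simp only [boundaryResidual, h₀, h₁, abs_mul, abs_of_nonneg hw, mul_min_of_nonneg _ _ hw,
    mul_max_of_nonneg _ _ hw]

end boundaryResidual

structure AprioriBound (u ux f : ℝ → ℝ → ℝ) (g₀ g₁ k₀ k₁ : ℝ → ℝ) (σ t R : ℝ) : Prop where
  nonneg_g₀ : ∀ s ∈ Ioc 0 t, 0 ≤ g₀ s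
  nonneg_g₁ : ∀ s ∈ Ioc 0 t, 0 ≤ g₁ s
  one_le_k₀ : ∀ s ∈ Ioc 0 t, 1 ≤ k₀ s
  one_le_k₁ : ∀ s ∈ Ioc 0 t, 1 ≤ k₁ s
  initial : ∀ x ∈ Icc (0:ℝ) 1, |u 0 x| ≤ R
  boundary : ∀ s ∈ Ioc 0 t, boundaryResidual u ux g₀ g₁ k₀ k₁ s ≤ R
  source : ∀ s ∈ Ioo 0 t, ∀ x ∈ Ioo (0:ℝ) 1, |f s x| ≤ σ * R

namespace AprioriBound

variable {u ux f : ℝ → ℝ → ℝ} {g₀ g₁ k₀ k₁ : ℝ → ℝ} {σ t R : ℝ}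

theorem neg (h : AprioriBound u ux f g₀ g₁ k₀ k₁ σ t R) :
    AprioriBound (-u) (-ux) (-f) g₀ g₁ k₀ k₁ σ t R where
  nonneg_g₀ := h.nonneg_g₀
  nonneg_g₁ := h.nonneg_g₁
  one_le_k₀ := h.one_le_k₀
  one_le_k₁ := h.one_le_k₁
  initial x hx := by simpa using h.initial x hx
  boundary s hs := by rw [boundaryResidual_neg]; exact h.boundary s hs
  source s hs x hx := by simpa using h.source s hs x hx

theorem mono (h : AprioriBound u ux f g₀ g₁ k₀ k₁ σ t R) {t' : ℝ} (ht' : t' ≤ t) :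
    AprioriBound u ux f g₀ g₁ k₀ k₁ σ t' R where
  nonneg_g₀ s hs := h.nonneg_g₀ s ⟨hs.1, hs.2.trans ht'⟩
  nonneg_g₁ s hs := h.nonneg_g₁ s ⟨hs.1, hs.2.trans ht'⟩
  one_le_k₀ s hs := h.one_le_k₀ s ⟨hs.1, hs.2.trans ht'⟩
  one_le_k₁ s hs := h.one_le_k₁ s ⟨hs.1, hs.2.trans ht'⟩
  initial := h.initial
  boundary s hs := h.boundary s ⟨hs.1, hs.2.trans ht'⟩
  source s hs := h.source s ⟨hs.1, hs.2.trans_le ht'⟩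

theorem mem_Ioo_of_isMaxOn_of_lt (h : AprioriBound u ux f g₀ g₁ k₀ k₁ σ t R) {s y : ℝ}
    (hs : s ∈ Ioc 0 t) (hd₀ : HasDerivWithinAt (u s) (ux s 0) (Icc 0 1) 0)
    (hd₁ : HasDerivWithinAt (u s) (ux s 1) (Icc 0 1) 1) (hy : y ∈ Icc 0 1)
    (hmax : IsMaxOn (u s) (Icc 0 1) y) (hR : R < u s y) : y ∈ Ioo 0 1 :=
  mem_Ioo_of_isMaxOn_of_robin_le hd₀ hd₁ (h.nonneg_g₀ s hs) (h.nonneg_g₁ s hs)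
    (h.one_le_k₀ s hs) (h.one_le_k₁ s hs) (le_max_left _ _ |>.trans (h.boundary s hs))
    (le_max_right _ _ |>.trans (h.boundary s hs)) hy hmax hR

end AprioriBound

namespace IsParabolicSolution

variable {T σ t R : ℝ} {a b c f u ut ux uxx : ℝ → ℝ → ℝ} {g₀ g₁ k₀ k₁ : ℝ → ℝ}

theorem exists_seq_solvesAt_isMaxOn (hu : IsParabolicSolution T a b c f u ut ux uxx) {ts : ℝ}
    (hts : ts ∈ Ioo 0 T) :
    ∃ (s X : ℕ → ℝ) (y : ℝ), y ∈ Icc (0:ℝ) 1 ∧ Tendsto s atTop (𝓝 ts) ∧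
      Tendsto X atTop (𝓝 y) ∧ ∀ n, SolvesAt a b c f u ut ux uxx (s n) ∧ s n ∈ Ioo 0 ts ∧
        X n ∈ Icc (0:ℝ) 1 ∧ IsMaxOn (u (s n)) (Icc 0 1) (X n) := by
  obtain ⟨s, hs_lim, hs⟩ := exists_seq_forall_of_frequently
    ((frequently_nhdsLT_of_ae_restrict hu.ae_solvesAt (Ioo_subset_Ioc_self hts)).and_eventually
      (Ioo_mem_nhdsLT hts.1))
  choose X hX hXmax using fun n => isCompact_Icc.exists_isMaxOn (nonempty_Icc.2 zero_le_one)
    (hu.continuousOn_slice ⟨(hs n).2.1.le, (hs n).2.2.le.trans hts.2.le⟩)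
  obtain ⟨y, hy, φ, hφ, hXy⟩ := isCompact_Icc.tendsto_subseq hX
  exact ⟨s ∘ φ, X ∘ φ, y, hy, (tendsto_nhdsWithin_iff.1 hs_lim).1.comp hφ.tendsto_atTop, hXy,
    fun n => ⟨(hs (φ n)).1, (hs (φ n)).2, hX (φ n), hXmax (φ n)⟩⟩

/-- The equation holds only at almost every time: spatial maximizers `Xₙ` of `u sₙ` at good times
`sₙ ↑ ts` accumulate at a maximizer `y`, and the inequality at `(sₙ, Xₙ)` passes to the limit by
continuity of `ut`. -/
theorem exists_isMaxOn_time_deriv_le (hu : IsParabolicSolution T a b c f u ut ux uxx)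
    (ha : ∀ s ∈ Ioo 0 T, ∀ x ∈ Ioo (0:ℝ) 1, 0 ≤ a s x)
    (hc : ∀ s ∈ Ioo 0 T, ∀ x ∈ Ioo (0:ℝ) 1, c s x ≤ -σ)
    (hR : AprioriBound u ux f g₀ g₁ k₀ k₁ σ t R) (htT : t < T) {δ ts xs : ℝ}
    (hmax : IsMaxOn (fun p : ℝ × ℝ => u p.1 p.2 + δ * p.1) (Icc 0 t ×ˢ Icc 0 1) (ts, xs))
    (hts : ts ∈ Ioc 0 t) (hxs : xs ∈ Icc 0 1) (hRxs : R < u ts xs) :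
    ∃ y ∈ Icc (0:ℝ) 1, IsMaxOn (fun p : ℝ × ℝ => u p.1 p.2 + δ * p.1) (Icc 0 t ×ˢ Icc 0 1)
      (ts, y) ∧ ut ts y ≤ -σ * u ts y + σ * R := by
  have hKT : Icc 0 t ×ˢ Icc 0 1 ⊆ Icc 0 T ×ˢ Icc (0:ℝ) 1 :=
    prod_mono (Icc_subset_Icc_right htT.le) subset_rfl
  have htsT : ts ∈ Ioo 0 T := ⟨hts.1, hts.2.trans_lt htT⟩
  have htsI : ts ∈ Icc 0 t := ⟨hts.1.le, hts.2⟩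
  obtain ⟨s, X, y, hy, hs_lim, hXy, hs⟩ := hu.exists_seq_solvesAt_isMaxOn htsT
  have hsT : ∀ n, s n ∈ Ioo 0 T := fun n => ⟨(hs n).2.1.1, (hs n).2.1.2.trans htsT.2⟩
  have hsI : ∀ n, s n ∈ Icc 0 t := fun n => ⟨(hs n).2.1.1.le, (hs n).2.1.2.le.trans hts.2⟩
  have hu_lim := (hu.continuousOn.mono hKT).tendsto_comp_prodMk (mk_mem_prod htsI hy) hs_lim hXy
    (.of_forall fun n => ⟨hsI n, (hs n).2.2.1⟩)
  have hymax : IsMaxOn (fun p : ℝ × ℝ => u p.1 p.2 + δ * p.1) (Icc 0 t ×ˢ Icc 0 1) (ts, y) := by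
    refine fun q hq => (hmax hq).trans (le_of_tendsto_of_tendsto' ?_ (hu_lim.add
      (tendsto_const_nhds.mul hs_lim)) fun n => add_le_add_left ((hs n).2.2.2 hxs) _)
    exact ((hu.continuousOn.mono hKT).tendsto_comp_prodMk (mk_mem_prod htsI hxs) hs_lim
      tendsto_const_nhds (.of_forall fun n => ⟨hsI n, hxs⟩)).add (tendsto_const_nhds.mul hs_lim)
  have hval : u ts y = u ts xs := le_antisymm (by simpa using hmax (mk_mem_prod htsI hy))
    (by simpa using hymax (mk_mem_prod htsI hxs))
  have hyI : y ∈ Ioo 0 1 := hR.mem_Ioo_of_isMaxOn_of_lt hts (hu.hasDerivWithinAt_zero ts htsT)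
    (hu.hasDerivWithinAt_one ts htsT) hy
    (fun x hx => by simpa using hymax (mk_mem_prod htsI hx)) (hval ▸ hRxs)
  have hR0 : 0 ≤ R := (boundaryResidual_nonneg ts).trans (hR.boundary ts hts)
  refine ⟨y, hy, hymax, le_of_tendsto_of_tendsto
    (hu.continuousOn_time_deriv.tendsto_comp_prodMk ⟨htsT, hy⟩ hs_lim hXy
      (.of_forall fun n => ⟨hsT n, (hs n).2.2.1⟩))
    ((tendsto_const_nhds.mul hu_lim).add tendsto_const_nhds) ?_⟩
  filter_upwards [hXy.eventually (isOpen_Ioo.mem_nhds hyI),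
    hu_lim.eventually (lt_mem_nhds (hR0.trans_lt (hval ▸ hRxs)))] with n hXn hpos
  have hpde := (hs n).1.time_deriv_le_of_isLocalMax hXn
    ((hs n).2.2.2.isLocalMax (Icc_mem_nhds hXn.1 hXn.2)) (ha _ (hsT n) _ hXn)
  have hf := (abs_le.1 (hR.source (s n) ⟨(hs n).2.1.1, (hs n).2.1.2.trans_le hts.2⟩ _ hXn)).2
  nlinarith [mul_le_mul_of_nonneg_right (hc _ (hsT n) _ hXn) hpos.le]

theorem le_of_aprioriBound (hu : IsParabolicSolution T a b c f u ut ux uxx)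
    (ha : ∀ s ∈ Ioo 0 T, ∀ x ∈ Ioo (0:ℝ) 1, 0 ≤ a s x)
    (hc : ∀ s ∈ Ioo 0 T, ∀ x ∈ Ioo (0:ℝ) 1, c s x ≤ -σ) (hσ : 0 < σ) (ht : t ∈ Ioo 0 T)
    (hR : AprioriBound u ux f g₀ g₁ k₀ k₁ σ t R) : ∀ x ∈ Icc (0:ℝ) 1, u t x ≤ R := by
  intro x₀ hx₀
  by_contra! hlt
  set δ := σ * (u t x₀ - R) / 2 with hδ_def
  have hδ : 0 < δ := by have := sub_pos.2 hlt; positivity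
  have hK : IsCompact (Icc 0 t ×ˢ Icc (0:ℝ) 1) := isCompact_Icc.prod isCompact_Icc
  have hΦ : ContinuousOn (fun p : ℝ × ℝ => u p.1 p.2 + δ * p.1) (Icc 0 t ×ˢ Icc 0 1) :=
    (hu.continuousOn.mono (prod_mono (Icc_subset_Icc_right ht.2.le) subset_rfl)).add
      (continuous_const.mul continuous_fst).continuousOn
  obtain ⟨⟨ts, xs⟩, ⟨hts, hxs⟩, hmax⟩ :=
    hK.exists_isMaxOn ⟨(t, x₀), mk_mem_prod ⟨ht.1.le, le_rfl⟩ hx₀⟩ hΦ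
  have hle : u t x₀ + δ * t ≤ u ts xs + δ * ts := hmax (mk_mem_prod ⟨ht.1.le, le_rfl⟩ hx₀)
  have hts0 : 0 < ts := by
    refine hts.1.lt_of_ne fun h0 => ?_
    subst h0
    nlinarith [(le_abs_self _).trans (hR.initial xs hxs), ht.1]
  have hRxs : R < u ts xs := by nlinarith [hts.2]
  obtain ⟨y, hy, hymax, hut⟩ :=
    hu.exists_isMaxOn_time_deriv_le ha hc hR ht.2 hmax ⟨hts0, hts.2⟩ hxs hRxs
  have hval : u ts y = u ts xs := le_antisymm (by simpa using hmax (mk_mem_prod hts hy))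
    (by simpa using hymax (mk_mem_prod hts hxs))
  have htime : 0 ≤ ut ts y + δ * 1 :=
    ((hu.hasDerivAt_time ts ⟨hts0, hts.2.trans_lt ht.2⟩ y hy).add
      ((hasDerivAt_id ts).const_mul δ)).nonneg_of_isMaxOn_Icc hts0
      fun r hr => hymax (mk_mem_prod ⟨hr.1, hr.2.trans hts.2⟩ hy)
  nlinarith [mul_nonneg hσ.le (show 0 ≤ u ts xs - u t x₀ by nlinarith [hts.2])]

theorem abs_le_of_aprioriBound_of_lt (hu : IsParabolicSolution T a b c f u ut ux uxx)
    (ha : ∀ s ∈ Ioo 0 T, ∀ x ∈ Ioo (0:ℝ) 1, 0 ≤ a s x)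
    (hc : ∀ s ∈ Ioo 0 T, ∀ x ∈ Ioo (0:ℝ) 1, c s x ≤ -σ) (hσ : 0 < σ) (ht : t ∈ Ioo 0 T)
    (hR : AprioriBound u ux f g₀ g₁ k₀ k₁ σ t R) (x : ℝ) (hx : x ∈ Icc (0:ℝ) 1) :
    |u t x| ≤ R :=
  abs_le.2 ⟨neg_le.1 (hu.neg.le_of_aprioriBound ha hc hσ ht hR.neg x hx),
    hu.le_of_aprioriBound ha hc hσ ht hR x hx⟩

/-- `ut` is only available on `(0,T)`: the final time is reached as a limit from below. -/
theorem abs_le_of_aprioriBound (hu : IsParabolicSolution T a b c f u ut ux uxx)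
    (ha : ∀ s ∈ Ioo 0 T, ∀ x ∈ Ioo (0:ℝ) 1, 0 ≤ a s x)
    (hc : ∀ s ∈ Ioo 0 T, ∀ x ∈ Ioo (0:ℝ) 1, c s x ≤ -σ) (hσ : 0 < σ) (ht : t ∈ Ioc 0 T)
    (hR : AprioriBound u ux f g₀ g₁ k₀ k₁ σ t R) (x : ℝ) (hx : x ∈ Icc (0:ℝ) 1) :
    |u t x| ≤ R := by
  refine le_of_tendsto (hu.continuousOn.tendsto_comp_prodMk (mk_mem_prod ⟨ht.1.le, ht.2⟩ hx)
    (tendsto_id.mono_left (nhdsWithin_le_nhds (s := Iio t))) tendsto_const_nhds ?_).abs ?_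
  all_goals filter_upwards [Ioo_mem_nhdsLT ht.1] with s hs
  · exact mk_mem_prod ⟨hs.1.le, hs.2.le.trans ht.2⟩ hx
  · exact hu.abs_le_of_aprioriBound_of_lt ha hc hσ ⟨hs.1, hs.2.trans_le ht.2⟩ (hR.mono hs.2.le) x hx

end IsParabolicSolution

theorem aprioriBound_mul_exp {u ux f : ℝ → ℝ → ℝ} {g₀ g₁ k₀ k₁ F : ℝ → ℝ} {σ ζ t R : ℝ}
    (hσ : 0 < σ) (hg₀ : ∀ s ∈ Ioc 0 t, 0 ≤ g₀ s) (hg₁ : ∀ s ∈ Ioc 0 t, 0 ≤ g₁ s)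
    (hk₀ : ∀ s ∈ Ioc 0 t, 1 ≤ k₀ s) (hk₁ : ∀ s ∈ Ioc 0 t, 1 ≤ k₁ s)
    (h0 : ∀ x ∈ Icc (0:ℝ) 1, Real.exp (-ζ * t) * |u 0 x| ≤ R)
    (hF : ∀ s ∈ Ioo 0 t, ∀ x ∈ Ioo (0:ℝ) 1, |f s x| ≤ F s)
    (hQ : ∀ s ∈ Ioc 0 t,
      max (boundaryResidual u ux g₀ g₁ k₀ k₁ s) (F s / σ) * Real.exp (-ζ * (t - s)) ≤ R) :
    AprioriBound (fun s x => Real.exp (-ζ * (t - s)) * u s x)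
      (fun s x => Real.exp (-ζ * (t - s)) * ux s x) (fun s x => Real.exp (-ζ * (t - s)) * f s x)
      g₀ g₁ k₀ k₁ σ t R where
  nonneg_g₀ := hg₀
  nonneg_g₁ := hg₁
  one_le_k₀ := hk₀
  one_le_k₁ := hk₁
  initial x hx := by simpa [abs_mul] using h0 x hx
  boundary s hs := calc
    _ = Real.exp (-ζ * (t - s)) * boundaryResidual u ux g₀ g₁ k₀ k₁ s :=
      boundaryResidual_mul (w := fun s => Real.exp (-ζ * (t - s))) (Real.exp_pos _).le
    _ ≤ R := by
      rw [mul_comm]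
      exact (mul_le_mul_of_nonneg_right (le_max_left _ _) (Real.exp_pos _).le).trans (hQ s hs)
  source s hs x hx := by
    have hE := Real.exp_pos (-ζ * (t - s))
    have hFQ : F s ≤ σ * max (boundaryResidual u ux g₀ g₁ k₀ k₁ s) (F s / σ) := by
      rw [← div_le_iff₀' hσ]; exact le_max_right _ _
    rw [abs_mul, abs_of_pos hE]
    calc Real.exp (-ζ * (t - s)) * |f s x|
        ≤ Real.exp (-ζ * (t - s)) * (σ * max (boundaryResidual u ux g₀ g₁ k₀ k₁ s) (F s / σ)) :=
          mul_le_mul_of_nonneg_left ((hF s hs x hx).trans hFQ) hE.le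
      _ ≤ σ * R := by
          nlinarith [hQ s (Ioo_subset_Ioc_self hs)]

theorem bddAbove_image_residual_mul_exp {T σ ζ t : ℝ} {u ux f : ℝ → ℝ → ℝ}
    {g₀ g₁ k₀ k₁ : ℝ → ℝ}
    (hu : ContinuousOn (fun p : ℝ × ℝ => u p.1 p.2) (Icc 0 T ×ˢ Icc 0 1))
    (hf : ∃ M : ℝ, ∀ t ∈ Ioc (0:ℝ) T, ∀ x ∈ Ioo (0:ℝ) 1, |f t x| ≤ M) (hσ : 0 < σ)
    (hζ : 0 ≤ ζ) (ht : t ≤ T) :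
    BddAbove ((fun s => max (boundaryResidual u ux g₀ g₁ k₀ k₁ s)
      (sSup ((fun x => |f s x|) '' Ioo 0 1) / σ) * Real.exp (-ζ * (t - s))) '' Ioc 0 t) := by
  obtain ⟨C, hC⟩ := (isCompact_Icc.prod isCompact_Icc).exists_bound_of_continuousOn hu
  obtain ⟨M, hM⟩ := hf
  refine ⟨max C (M / σ), forall_mem_image.2 fun s hs => ?_⟩
  have hu_le : ∀ x ∈ Icc (0:ℝ) 1, |u s x| ≤ C := fun x hx => by
    simpa using hC _ (mk_mem_prod ⟨hs.1.le, hs.2.trans ht⟩ hx)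
  have hres : boundaryResidual u ux g₀ g₁ k₀ k₁ s ≤ C :=
    max_le ((min_le_left _ _).trans (hu_le 0 (left_mem_Icc.2 zero_le_one)))
      ((min_le_left _ _).trans (hu_le 1 (right_mem_Icc.2 zero_le_one)))
  have hF : sSup ((fun x => |f s x|) '' Ioo 0 1) ≤ M := csSup_le
    ((nonempty_Ioo.2 zero_lt_one).image _) (forall_mem_image.2 (hM s ⟨hs.1, hs.2.trans ht⟩))
  have hE : Real.exp (-ζ * (t - s)) ≤ 1 := Real.exp_le_one_iff.2 (by nlinarith [hs.2])
  exact (mul_le_of_le_one_right ((boundaryResidual_nonneg s).trans (le_max_left _ _)) hE).trans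
    (max_le_max hres (div_le_div_of_nonneg_right hF hσ.le))

theorem lem4_4_general
    (T : ℝ)
    (a b c f : ℝ → ℝ → ℝ)
    (hf_bdd : ∃ M : ℝ, ∀ t ∈ Set.Ioc (0:ℝ) T, ∀ x ∈ Set.Ioo (0:ℝ) 1, |f t x| ≤ M)
    (u ut ux uxx : ℝ → ℝ → ℝ)
    (hu_cont : ContinuousOn (fun p : ℝ × ℝ => u p.1 p.2) (Set.Icc 0 T ×ˢ Set.Icc 0 1))
    (hut : ∀ t ∈ Set.Ioo (0:ℝ) T, ∀ x ∈ Set.Icc (0:ℝ) 1,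
      HasDerivAt (fun τ => u τ x) (ut t x) t)
    (hut_cont : ContinuousOn (fun p : ℝ × ℝ => ut p.1 p.2) (Set.Ioo 0 T ×ˢ Set.Icc 0 1))
    (hux_bd : ∀ t ∈ Set.Ioc (0:ℝ) T,
      HasDerivWithinAt (u t) (ux t 0) (Set.Icc 0 1) 0 ∧
      HasDerivWithinAt (u t) (ux t 1) (Set.Icc 0 1) 1)
    (hC2_pde : ∀ᵐ t ∂(volume.restrict (Set.Ioo 0 T)),
      (∀ x ∈ Set.Ioo (0:ℝ) 1, HasDerivAt (u t) (ux t x) x) ∧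
      (∀ x ∈ Set.Ioo (0:ℝ) 1, HasDerivAt (ux t) (uxx t x) x) ∧
      ContinuousOn (uxx t) (Set.Ioo 0 1) ∧
      (∀ x ∈ Set.Ioo (0:ℝ) 1,
        ut t x = a t x * uxx t x + b t x * ux t x + c t x * u t x + f t x))
    (ha : ∀ t ∈ Set.Ioo (0:ℝ) T, ∀ x ∈ Set.Ioo (0:ℝ) 1, 0 ≤ a t x)
    (σ : ℝ)
    (hσ_def : σ = - sSup ((fun p : ℝ × ℝ => c p.1 p.2) '' (Set.Ioo 0 T ×ˢ Set.Ioo 0 1))) :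
    ∀ ζ ∈ Set.Ico (0:ℝ) σ, ∀ g₀ g₁ k₀ k₁ : ℝ → ℝ,
      (∀ s ∈ Set.Ioc (0:ℝ) T, 0 < g₀ s) → (∀ s ∈ Set.Ioc (0:ℝ) T, 0 < g₁ s) →
      (∀ s ∈ Set.Ioc (0:ℝ) T, 1 ≤ k₀ s) → (∀ s ∈ Set.Ioc (0:ℝ) T, 1 ≤ k₁ s) →
      ∀ t ∈ Set.Ioc (0:ℝ) T,
      sSup ((fun x => |u t x|) '' Set.Icc 0 1) ≤
        max (Real.exp (-ζ * t) * sSup ((fun x => |u 0 x|) '' Set.Icc 0 1))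
          (sSup ((fun s =>
              max (max
                  (min (|u s 0|) (|g₀ s * ux s 0 - k₀ s * u s 0|))
                  (min (|u s 1|) (|g₁ s * ux s 1 + k₁ s * u s 1|)))
                (sSup ((fun x => |f s x|) '' Set.Ioo 0 1) / (σ - ζ)) *
              Real.exp (-ζ * (t - s))) '' Set.Ioc 0 t)) := by
  intro ζ hζ g₀ g₁ k₀ k₁ hg₀ hg₁ hk₀ hk₁ t ht
  have hσζ : 0 < σ - ζ := sub_pos.2 hζ.2
  have hsol : IsParabolicSolution T a b c f u ut ux uxx :=
    ⟨hu_cont, hut, hut_cont, fun s hs => (hux_bd s (Ioo_subset_Ioc_self hs)).1,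
      fun s hs => (hux_bd s (Ioo_subset_Ioc_self hs)).2,
      hC2_pde.mono fun _ h => ⟨h.1, h.2.1, h.2.2.2⟩⟩
  have hc : ∀ s ∈ Ioo 0 T, ∀ x ∈ Ioo (0:ℝ) 1, c s x + ζ ≤ -(σ - ζ) := fun s hs x hx => by
    linarith [le_neg_of_eq_neg_sSup hσ_def (hζ.1.trans_lt hζ.2)
      (mem_image_of_mem (fun p : ℝ × ℝ => c p.1 p.2) (mk_mem_prod hs hx))]
  have hsub : Ioc 0 t ⊆ Ioc 0 T := Ioc_subset_Ioc_right ht.2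
  obtain ⟨M, hM⟩ := hf_bdd
  refine csSup_le ((nonempty_Icc.2 zero_le_one).image _) (forall_mem_image.2 fun x hx => ?_)
  calc |u t x| = |Real.exp (-ζ * (t - t)) * u t x| := by simp
    _ ≤ _ := (hsol.mul_exp ζ t).abs_le_of_aprioriBound ha hc hσζ ht
      (aprioriBound_mul_exp hσζ (fun s hs => (hg₀ s (hsub hs)).le)
        (fun s hs => (hg₁ s (hsub hs)).le) (fun s hs => hk₀ s (hsub hs))
        (fun s hs => hk₁ s (hsub hs))
        (fun y hy => le_max_of_le_left (mul_le_mul_of_nonneg_left (le_csSup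
          (isCompact_Icc.bddAbove_image (hsol.continuousOn_slice ⟨le_rfl, ht.1.le.trans ht.2⟩).abs)
          (mem_image_of_mem _ hy)) (Real.exp_pos _).le))
        (fun s hs y hy => le_csSup ⟨M, forall_mem_image.2 (hM s (hsub (Ioo_subset_Ioc_self hs)))⟩
          (mem_image_of_mem _ hy))
        (fun s hs => le_max_of_le_right (le_csSup (bddAbove_image_residual_mul_exp hu_cont
          ⟨M, hM⟩ hσζ hζ.1 ht.2) (mem_image_of_mem _ hs)))) x hx

/-- **Lemma 4.4** (Karafyllis–Krstic): unweighted ISS-style maximum principle estimate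
under `σ = -sup c > 0`, with boundary terms `r₀, r₁` involving the spatial derivative at
the boundary, for arbitrary `g₀, g₁ : (0,T] → (0,∞)` and `k₀, k₁ : (0,T] → [1,∞)`. -/
theorem lem4_4
    (T : ℝ) (hT : 0 < T)
    (a b c f : ℝ → ℝ → ℝ)
    (hf_bdd : ∃ M : ℝ, ∀ t ∈ Set.Ioc (0:ℝ) T, ∀ x ∈ Set.Ioo (0:ℝ) 1, |f t x| ≤ M)
    (u ut ux uxx : ℝ → ℝ → ℝ)
    (hu_cont : ContinuousOn (fun p : ℝ × ℝ => u p.1 p.2) (Set.Icc 0 T ×ˢ Set.Icc 0 1))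
    (hut : ∀ t ∈ Set.Ioo (0:ℝ) T, ∀ x ∈ Set.Icc (0:ℝ) 1,
      HasDerivAt (fun τ => u τ x) (ut t x) t)
    (hut_cont : ContinuousOn (fun p : ℝ × ℝ => ut p.1 p.2) (Set.Ioo 0 T ×ˢ Set.Icc 0 1))
    (hux_bd : ∀ t ∈ Set.Ioc (0:ℝ) T,
      HasDerivWithinAt (u t) (ux t 0) (Set.Icc 0 1) 0 ∧
      HasDerivWithinAt (u t) (ux t 1) (Set.Icc 0 1) 1)
    (hC2_pde : ∀ᵐ t ∂(volume.restrict (Set.Ioo 0 T)),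
      (∀ x ∈ Set.Ioo (0:ℝ) 1, HasDerivAt (u t) (ux t x) x) ∧
      (∀ x ∈ Set.Ioo (0:ℝ) 1, HasDerivAt (ux t) (uxx t x) x) ∧
      ContinuousOn (uxx t) (Set.Ioo 0 1) ∧
      (∀ x ∈ Set.Ioo (0:ℝ) 1,
        ut t x = a t x * uxx t x + b t x * ux t x + c t x * u t x + f t x))
    (ha : ∀ t ∈ Set.Ioo (0:ℝ) T, ∀ x ∈ Set.Ioo (0:ℝ) 1, 0 ≤ a t x)
    (σ : ℝ)
    (hσ_def : σ = - sSup ((fun p : ℝ × ℝ => c p.1 p.2) '' (Set.Ioo 0 T ×ˢ Set.Ioo 0 1)))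
    (hσ : 0 < σ) :
    ∀ ζ ∈ Set.Ico (0:ℝ) σ, ∀ g₀ g₁ k₀ k₁ : ℝ → ℝ,
      (∀ s ∈ Set.Ioc (0:ℝ) T, 0 < g₀ s) → (∀ s ∈ Set.Ioc (0:ℝ) T, 0 < g₁ s) →
      (∀ s ∈ Set.Ioc (0:ℝ) T, 1 ≤ k₀ s) → (∀ s ∈ Set.Ioc (0:ℝ) T, 1 ≤ k₁ s) →
      ∀ t ∈ Set.Ioc (0:ℝ) T,
      sSup ((fun x => |u t x|) '' Set.Icc 0 1) ≤
        max (Real.exp (-ζ * t) * sSup ((fun x => |u 0 x|) '' Set.Icc 0 1))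
          (sSup ((fun s =>
              max (max
                  (min (|u s 0|) (|g₀ s * ux s 0 - k₀ s * u s 0|))
                  (min (|u s 1|) (|g₁ s * ux s 1 + k₁ s * u s 1|)))
                (sSup ((fun x => |f s x|) '' Set.Ioo 0 1) / (σ - ζ)) *
              Real.exp (-ζ * (t - s))) '' Set.Ioc 0 t)) :=
  lem4_4_general T a b c f hf_bdd u ut ux uxx hu_cont hut hut_cont hux_bd hC2_pde ha σ hσ_def
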